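/- Fix β real with 0 < |β| < 1, γ = (1−β²)^{−1/2}, and x₁, x₂ ∈ ℝ. Let R(x; β, x₁, x₂) = 4·arctan(β sinh(γ(x+x₂))/cosh(γ x₁)) and Rₜ(x; β, x₁, x₂) = −4β²γ sinh(γ(x+x₂)) sinh(γ x₁)/(cosh²(γ x₁) + β² sinh²(γ(x+x₂))), and write R′ = ∂ₓR, R_{t,1} = ∂_{x₁}Rₜ, R_{t,2} = ∂_{x₂}Rₜ. Then: (a) when x₂ = 0, the functions x ↦ Rₜ(x) and x ↦ R_{t,1}(x) are odd, and the functions x ↦ R′(x) and x ↦ R_{t,2}(x) are even; (b) for all x₁, x₂ ∈ ℝ, the products Rₜ·R′ and R_{t,1}·R_{t,2} are integrable over ℝ and ∫_ℝ Rₜ(x) R′(x) dx = 0 and ∫_ℝ R_{t,1}(x) R_{t,2}(x) dx = 0. -/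

import Mathlib

/-! `R` and `Rₜ` depend on `x` and `x₂` only through `x + x₂`, so each integrand in (b) is a
translate of its value at `x₂ = 0`. There `Rₜ` and `∂_{x₁}Rₜ` are odd in `x` while `∂ₓR` and
`∂_{x₂}Rₜ = ∂ₓRₜ` are even, which is (a); hence both integrands are odd and integrate to zero.
For integrability, the common denominator `D = cosh²(γx₁) + β² sinh²(γx)` dominates
`β² cosh²(γx)`, so `Rₜ` and `∂ₓRₜ` are `O(sech(γx))` while `∂ₓR` and `∂_{x₁}Rₜ` are bounded; and
`sech` is integrable because `2 cosh x ≥ 1 + x²`. -/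

open MeasureTheory Real

theorem Function.Odd.deriv_even {𝕜 F : Type*} [NontriviallyNormedField 𝕜] [NormedAddCommGroup F]
    [NormedSpace 𝕜 F] {f : 𝕜 → F} (hf : f.Odd) : (deriv f).Even := by
  intro x
  have hf' : f = -fun y => f (-y) := funext fun y => by simp [hf y]
  calc deriv f (-x) = deriv (-fun y => f (-y)) (-x) := by rw [← hf']
    _ = deriv f x := by rw [deriv.neg, deriv_comp_neg, neg_neg, neg_neg]

theorem Function.Odd.integral_eq_zero {G E : Type*} [MeasurableSpace G] [AddGroup G]
    [MeasurableNeg G] [NormedAddCommGroup E] [NormedSpace ℝ E] {μ : Measure G}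
    [μ.IsNegInvariant] {f : G → E} (hf : f.Odd) : ∫ x, f x ∂μ = 0 := by
  have h := integral_neg_eq_self f μ
  simp only [hf.eq, integral_neg] at h
  have h2 : (2 : ℝ) • ∫ x, f x ∂μ = 0 := by
    rw [two_smul]; nth_rw 1 [← h]; exact neg_add_cancel _
  exact (smul_eq_zero.mp h2).resolve_left two_ne_zero

theorem Function.Odd.integral_comp_add_right_eq_zero {G E : Type*} [MeasurableSpace G]
    [AddGroup G] [MeasurableAdd G] [MeasurableNeg G] [NormedAddCommGroup E] [NormedSpace ℝ E]
    {μ : Measure G} [μ.IsAddRightInvariant] [μ.IsNegInvariant] {f : G → E} (hf : f.Odd) (a : G) :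
    ∫ x, f (x + a) ∂μ = 0 :=
  (integral_add_right_eq_self f a).trans hf.integral_eq_zero

theorem Real.one_add_sq_le_two_mul_cosh (x : ℝ) : 1 + x ^ 2 ≤ 2 * cosh x := by
  have hsinh : (x / 2) ^ 2 ≤ sinh (x / 2) ^ 2 := by
    rw [← sq_abs (sinh _), abs_sinh, ← sq_abs (x / 2)]
    gcongr
    exact self_le_sinh_iff.mpr (abs_nonneg _)
  have hcosh : cosh x = 1 + 2 * sinh (x / 2) ^ 2 := by
    rw [← mul_div_cancel₀ x two_ne_zero, cosh_two_mul, cosh_sq']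
    ring_nf
  nlinarith

theorem Real.integrable_inv_cosh : Integrable fun x : ℝ => (cosh x)⁻¹ := by
  refine (integrable_inv_one_add_sq.const_mul 2).mono'
    (continuous_cosh.inv₀ fun x => (cosh_pos x).ne').aestronglyMeasurable
    (ae_of_all _ fun x => ?_)
  rw [Real.norm_eq_abs, abs_of_pos (inv_pos.mpr (cosh_pos x))]
  calc (cosh x)⁻¹ ≤ ((1 + x ^ 2) / 2)⁻¹ :=
        inv_anti₀ (by positivity) (by linarith [one_add_sq_le_two_mul_cosh x])
    _ = 2 * (1 + x ^ 2)⁻¹ := by rw [inv_div, div_eq_mul_inv]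

theorem integrable_of_abs_le_div_cosh {f : ℝ → ℝ} {γ A : ℝ} (hγ : γ ≠ 0)
    (hf : AEStronglyMeasurable f) (hle : ∀ x, |f x| ≤ A / cosh (γ * x)) : Integrable f :=
  ((integrable_inv_cosh.comp_mul_left' hγ).const_mul A).mono' hf (ae_of_all _ hle)

theorem Real.abs_sinh_le_cosh (x : ℝ) : |sinh x| ≤ cosh x :=
  abs_le.mpr ⟨by linarith [sinh_lt_cosh (-x), sinh_neg x, cosh_neg x], (sinh_lt_cosh x).le⟩

namespace TwoKink

noncomputable section

variable (β γ : ℝ)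

def denom (x x₁ : ℝ) : ℝ := cosh (γ * x₁) ^ 2 + β ^ 2 * sinh (γ * x) ^ 2

-- `profile β γ x x₁ x₂` is `R(x; β, x₁, x₂)` and `velocity β γ x x₁ x₂` is `Rₜ(x; β, x₁, x₂)`.
def profile (x x₁ x₂ : ℝ) : ℝ := 4 * arctan (β * sinh (γ * (x + x₂)) / cosh (γ * x₁))

def velocity (x x₁ x₂ : ℝ) : ℝ :=
  -4 * β ^ 2 * γ * sinh (γ * (x + x₂)) * sinh (γ * x₁) / denom β γ (x + x₂) x₁

variable {β γ}

theorem denom_pos (x x₁ : ℝ) : 0 < denom β γ x x₁ := by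
  have := cosh_pos (γ * x₁)
  unfold denom
  positivity

theorem denom_neg (x x₁ : ℝ) : denom β γ (-x) x₁ = denom β γ x x₁ := by
  simp only [denom, mul_neg, sinh_neg, even_two, Even.neg_pow]

theorem sq_mul_cosh_sq_le_denom (hβ : |β| ≤ 1) (x x₁ : ℝ) :
    β ^ 2 * cosh (γ * x) ^ 2 ≤ denom β γ x x₁ := by
  have hβ2 : β ^ 2 ≤ 1 := by rwa [sq_le_one_iff_abs_le_one]
  have hc := one_le_cosh (γ * x₁)
  rw [denom, cosh_sq']
  nlinarith

theorem profile_neg (x x₁ x₂ : ℝ) : profile β γ (-x) x₁ (-x₂) = -profile β γ x x₁ x₂ := by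
  simp only [profile, ← neg_add, mul_neg, sinh_neg, neg_div, arctan_neg]

theorem velocity_neg (x x₁ x₂ : ℝ) : velocity β γ (-x) x₁ (-x₂) = -velocity β γ x x₁ x₂ := by
  simp only [velocity, ← neg_add, denom_neg, mul_neg, sinh_neg]
  ring

theorem profile_eq_centered (x x₁ x₂ : ℝ) : profile β γ x x₁ x₂ = profile β γ (x + x₂) x₁ 0 := by
  simp only [profile, add_zero]

theorem velocity_eq_centered (x x₁ x₂ : ℝ) :
    velocity β γ x x₁ x₂ = velocity β γ (x + x₂) x₁ 0 := by
  simp only [velocity, add_zero]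

theorem odd_profile (x₁ : ℝ) : Function.Odd fun x => profile β γ x x₁ 0 := fun x => by
  simpa using profile_neg (β := β) (γ := γ) x x₁ 0

theorem odd_velocity (x₁ : ℝ) : Function.Odd fun x => velocity β γ x x₁ 0 := fun x => by
  simpa using velocity_neg (β := β) (γ := γ) x x₁ 0

theorem odd_deriv_velocity_x₁ (x₁ : ℝ) :
    Function.Odd fun x => deriv (fun y => velocity β γ x y 0) x₁ := fun x => by
  have : (fun y => velocity β γ (-x) y 0) = -fun y => velocity β γ x y 0 :=
    funext fun y => by simpa using velocity_neg (β := β) (γ := γ) x y 0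
  simp only [this, deriv.neg]

theorem deriv_profile_eq_centered (x x₁ x₂ : ℝ) :
    deriv (fun y => profile β γ y x₁ x₂) x = deriv (fun y => profile β γ y x₁ 0) (x + x₂) := by
  simp only [profile_eq_centered _ _ x₂]
  exact deriv_comp_add_const (fun y => profile β γ y x₁ 0) x₂ x

theorem deriv_velocity_x₂_eq_centered (x x₁ x₂ : ℝ) :
    deriv (fun y => velocity β γ x x₁ y) x₂ = deriv (fun y => velocity β γ y x₁ 0) (x + x₂) := by
  have : (fun y => velocity β γ x x₁ y) = fun y => velocity β γ (x + y) x₁ 0 :=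
    funext fun y => velocity_eq_centered x x₁ y
  rw [this]
  exact deriv_comp_const_add (fun y => velocity β γ y x₁ 0) x x₂

theorem hasDerivAt_denom (x x₁ : ℝ) :
    HasDerivAt (fun y => denom β γ y x₁) (2 * β ^ 2 * γ * sinh (γ * x) * cosh (γ * x)) x := by
  refine ((((hasDerivAt_id x).const_mul γ).sinh.pow 2).const_mul (β ^ 2)).const_add
    (cosh (γ * x₁) ^ 2) |>.congr_deriv ?_
  simp only [id, mul_one, Nat.cast_ofNat]
  ring

theorem hasDerivAt_denom_x₁ (x x₁ : ℝ) :
    HasDerivAt (fun y => denom β γ x y) (2 * γ * cosh (γ * x₁) * sinh (γ * x₁)) x₁ := by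
  refine (((hasDerivAt_id x₁).const_mul γ).cosh.pow 2).add_const (β ^ 2 * sinh (γ * x) ^ 2)
    |>.congr_deriv ?_
  simp only [id, mul_one, Nat.cast_ofNat]
  ring

theorem hasDerivAt_profile (x x₁ : ℝ) :
    HasDerivAt (fun y => profile β γ y x₁ 0)
      (4 * β * γ * cosh (γ * x₁) * cosh (γ * x) / denom β γ x x₁) x := by
  have hc := cosh_pos (γ * x₁)
  have hD := denom_pos (β := β) (γ := γ) x x₁
  simp only [profile, add_zero]
  refine ((((hasDerivAt_id x).const_mul γ).sinh.const_mul β).div_const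
    (cosh (γ * x₁))).arctan.const_mul 4 |>.congr_deriv ?_
  simp only [denom, id, mul_one] at hD ⊢
  field_simp

theorem hasDerivAt_velocity (x x₁ : ℝ) :
    HasDerivAt (fun y => velocity β γ y x₁ 0)
      (-4 * β ^ 2 * γ ^ 2 * sinh (γ * x₁) * cosh (γ * x)
        * (denom β γ x x₁ - 2 * β ^ 2 * sinh (γ * x) ^ 2) / denom β γ x x₁ ^ 2) x := by
  simp only [velocity, add_zero]
  refine ((((hasDerivAt_id x).const_mul γ).sinh.const_mul (-4 * β ^ 2 * γ)).mul_const
    (sinh (γ * x₁))).div (hasDerivAt_denom x x₁) (denom_pos x x₁).ne' |>.congr_deriv ?_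
  simp only [id, mul_one]
  ring

theorem hasDerivAt_velocity_x₁ (x x₁ : ℝ) :
    HasDerivAt (fun y => velocity β γ x y 0)
      (-4 * β ^ 2 * γ ^ 2 * cosh (γ * x₁) * sinh (γ * x)
        * (denom β γ x x₁ - 2 * sinh (γ * x₁) ^ 2) / denom β γ x x₁ ^ 2) x₁ := by
  simp only [velocity, add_zero]
  refine (((hasDerivAt_id x₁).const_mul γ).sinh.const_mul (-4 * β ^ 2 * γ * sinh (γ * x))).div
    (hasDerivAt_denom_x₁ x x₁) (denom_pos x x₁).ne' |>.congr_deriv ?_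
  simp only [id, mul_one]
  ring

theorem abs_velocity_le (hβ : |β| ≤ 1) (x x₁ : ℝ) :
    |velocity β γ x x₁ 0| ≤ 4 * |γ * sinh (γ * x₁)| / cosh (γ * x) := by
  have hD := denom_pos (β := β) (γ := γ) x x₁
  have hC := cosh_pos (γ * x)
  have hSC := abs_sinh_le_cosh (γ * x)
  have hCD := sq_mul_cosh_sq_le_denom (γ := γ) hβ x x₁
  rw [velocity, add_zero, abs_div, abs_of_pos hD, div_le_div_iff₀ hD hC]
  calc |-4 * β ^ 2 * γ * sinh (γ * x) * sinh (γ * x₁)| * cosh (γ * x)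
      = 4 * |γ * sinh (γ * x₁)| * (β ^ 2 * |sinh (γ * x)| * cosh (γ * x)) := by
        simp only [abs_mul, abs_neg, abs_pow, sq_abs, Nat.abs_ofNat]; ring
    _ ≤ 4 * |γ * sinh (γ * x₁)| * denom β γ x x₁ := by
        gcongr
        nlinarith [mul_le_mul_of_nonneg_left (mul_le_mul_of_nonneg_right hSC hC.le) (sq_nonneg β)]

theorem abs_deriv_velocity_le (hβ : |β| ≤ 1) (x x₁ : ℝ) :
    |deriv (fun y => velocity β γ y x₁ 0) x| ≤ 4 * γ ^ 2 * |sinh (γ * x₁)| / cosh (γ * x) := by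
  have hD := denom_pos (β := β) (γ := γ) x x₁
  have hC := cosh_pos (γ * x)
  have hCD := sq_mul_cosh_sq_le_denom (γ := γ) hβ x x₁
  have hnum : |denom β γ x x₁ - 2 * β ^ 2 * sinh (γ * x) ^ 2| ≤ denom β γ x x₁ := by
    rw [abs_le, denom]; constructor <;> nlinarith [sq_nonneg (β * sinh (γ * x))]
  rw [(hasDerivAt_velocity x x₁).deriv, abs_div, abs_of_pos (pow_pos hD 2),
    div_le_div_iff₀ (pow_pos hD 2) hC]
  calc |-4 * β ^ 2 * γ ^ 2 * sinh (γ * x₁) * cosh (γ * x)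
        * (denom β γ x x₁ - 2 * β ^ 2 * sinh (γ * x) ^ 2)| * cosh (γ * x)
      = 4 * γ ^ 2 * |sinh (γ * x₁)| * ((β ^ 2 * cosh (γ * x) ^ 2)
          * |denom β γ x x₁ - 2 * β ^ 2 * sinh (γ * x) ^ 2|) := by
        simp only [abs_mul, abs_neg, abs_pow, sq_abs, Nat.abs_ofNat, abs_of_pos hC]; ring
    _ ≤ 4 * γ ^ 2 * |sinh (γ * x₁)| * (denom β γ x x₁ * denom β γ x x₁) := by
        gcongr
    _ = 4 * γ ^ 2 * |sinh (γ * x₁)| * denom β γ x x₁ ^ 2 := by ring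

theorem abs_deriv_profile_le (hβ : |β| ≤ 1) (x x₁ : ℝ) :
    |deriv (fun y => profile β γ y x₁ 0) x| ≤ 4 * |γ| := by
  have hD := denom_pos (β := β) (γ := γ) x x₁
  have hc := cosh_pos (γ * x₁)
  have hC := cosh_pos (γ * x)
  have hCD := sq_mul_cosh_sq_le_denom (γ := γ) hβ x x₁
  have hcD : cosh (γ * x₁) ^ 2 ≤ denom β γ x x₁ := by
    rw [denom]; nlinarith [sq_nonneg (β * sinh (γ * x))]
  have hβcC : |β| * cosh (γ * x₁) * cosh (γ * x) ≤ denom β γ x x₁ := by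
    refine abs_le_of_sq_le_sq' ?_ hD.le |>.2
    calc (|β| * cosh (γ * x₁) * cosh (γ * x)) ^ 2
        = (β ^ 2 * cosh (γ * x) ^ 2) * cosh (γ * x₁) ^ 2 := by rw [← sq_abs β]; ring
      _ ≤ denom β γ x x₁ ^ 2 := by rw [sq (denom _ _ _ _)]; gcongr
  rw [(hasDerivAt_profile x x₁).deriv, abs_div, abs_of_pos hD, div_le_iff₀ hD]
  calc |4 * β * γ * cosh (γ * x₁) * cosh (γ * x)|
      = 4 * |γ| * (|β| * cosh (γ * x₁) * cosh (γ * x)) := by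
        simp only [abs_mul, Nat.abs_ofNat, abs_of_pos hc, abs_of_pos hC]; ring
    _ ≤ 4 * |γ| * denom β γ x x₁ := by gcongr

theorem abs_deriv_velocity_x₁_le (hβ : |β| ≤ 1) (x x₁ : ℝ) :
    |deriv (fun y => velocity β γ x y 0) x₁| ≤ 12 * γ ^ 2 * cosh (γ * x₁) := by
  have hD := denom_pos (β := β) (γ := γ) x x₁
  have hc := cosh_pos (γ * x₁)
  have hSC := abs_sinh_le_cosh (γ * x)
  have hC1 := one_le_cosh (γ * x)
  have hCD := sq_mul_cosh_sq_le_denom (γ := γ) hβ x x₁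
  have hSD : β ^ 2 * |sinh (γ * x)| ≤ denom β γ x x₁ := by
    nlinarith [mul_le_mul_of_nonneg_left (hSC.trans (le_self_pow₀ hC1 two_ne_zero)) (sq_nonneg β)]
  have hnum : |denom β γ x x₁ - 2 * sinh (γ * x₁) ^ 2| ≤ 3 * denom β γ x x₁ := by
    have := cosh_sq' (γ * x₁)
    rw [abs_le, denom]; constructor <;> nlinarith [sq_nonneg (β * sinh (γ * x))]
  rw [(hasDerivAt_velocity_x₁ x x₁).deriv, abs_div, abs_of_pos (pow_pos hD 2),
    div_le_iff₀ (pow_pos hD 2)]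
  calc |-4 * β ^ 2 * γ ^ 2 * cosh (γ * x₁) * sinh (γ * x)
        * (denom β γ x x₁ - 2 * sinh (γ * x₁) ^ 2)|
      = 4 * γ ^ 2 * cosh (γ * x₁) * ((β ^ 2 * |sinh (γ * x)|)
          * |denom β γ x x₁ - 2 * sinh (γ * x₁) ^ 2|) := by
        simp only [abs_mul, abs_neg, abs_pow, sq_abs, Nat.abs_ofNat, abs_of_pos hc]; ring
    _ ≤ 4 * γ ^ 2 * cosh (γ * x₁) * (denom β γ x x₁ * (3 * denom β γ x x₁)) := by gcongr
    _ = 12 * γ ^ 2 * cosh (γ * x₁) * denom β γ x x₁ ^ 2 := by ring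

theorem measurable_deriv_velocity_x₁ (x₁ : ℝ) :
    Measurable fun x => deriv (fun y => velocity β γ x y 0) x₁ := by
  simp only [fun x => (hasDerivAt_velocity_x₁ (β := β) (γ := γ) x x₁).deriv, denom]
  fun_prop

theorem integrable_velocity_mul_deriv_profile (hβ : |β| ≤ 1) (hγ : γ ≠ 0) (x₁ : ℝ) :
    Integrable fun x => velocity β γ x x₁ 0 * deriv (fun y => profile β γ y x₁ 0) x :=
  (integrable_of_abs_le_div_cosh hγ
      (by unfold velocity denom; fun_prop : Measurable _).aestronglyMeasurable
      (abs_velocity_le hβ · x₁)).mul_bdd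
    (measurable_deriv _).aestronglyMeasurable (ae_of_all _ (abs_deriv_profile_le hβ · x₁))

theorem integrable_deriv_velocity_x₁_mul_deriv_velocity (hβ : |β| ≤ 1) (hγ : γ ≠ 0)
    (x₁ : ℝ) :
    Integrable fun x =>
      deriv (fun y => velocity β γ x y 0) x₁ * deriv (fun y => velocity β γ y x₁ 0) x :=
  (integrable_of_abs_le_div_cosh hγ (measurable_deriv _).aestronglyMeasurable
      (abs_deriv_velocity_le hβ · x₁)).bdd_mul
    (measurable_deriv_velocity_x₁ x₁).aestronglyMeasurable
    (ae_of_all _ (abs_deriv_velocity_x₁_le hβ · x₁))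

end

end TwoKink

open TwoKink

theorem two_kink_parity_orthogonality_general (β : ℝ) (hβ1 : |β| < 1)
    (γ : ℝ) (hγ : γ = (1 - β ^ 2) ^ (-(1 / 2 : ℝ)))
    (R Rt : ℝ → ℝ → ℝ → ℝ)
    (hR : ∀ x y₁ y₂ : ℝ, R x y₁ y₂
      = 4 * Real.arctan (β * Real.sinh (γ * (x + y₂)) / Real.cosh (γ * y₁)))
    (hRt : ∀ x y₁ y₂ : ℝ, Rt x y₁ y₂
      = -4 * β ^ 2 * γ * Real.sinh (γ * (x + y₂)) * Real.sinh (γ * y₁)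
          / ((Real.cosh (γ * y₁)) ^ 2 + β ^ 2 * (Real.sinh (γ * (x + y₂))) ^ 2)) :
    -- (a) parity at x₂ = 0
    (∀ x₁ x : ℝ, Rt (-x) x₁ 0 = -Rt x x₁ 0) ∧
    (∀ x₁ x : ℝ, deriv (fun y₁ => Rt (-x) y₁ 0) x₁ = -deriv (fun y₁ => Rt x y₁ 0) x₁) ∧
    (∀ x₁ x : ℝ, deriv (fun y => R y x₁ 0) (-x) = deriv (fun y => R y x₁ 0) x) ∧
    (∀ x₁ x : ℝ, deriv (fun y₂ => Rt (-x) x₁ y₂) 0 = deriv (fun y₂ => Rt x x₁ y₂) 0) ∧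
    -- (b) orthogonality for all shifts
    (∀ x₁ x₂ : ℝ,
      Integrable (fun x : ℝ => Rt x x₁ x₂ * deriv (fun y => R y x₁ x₂) x) ∧
      Integrable (fun x : ℝ =>
        deriv (fun y₁ => Rt x y₁ x₂) x₁ * deriv (fun y₂ => Rt x x₁ y₂) x₂) ∧
      (∫ x : ℝ, Rt x x₁ x₂ * deriv (fun y => R y x₁ x₂) x) = 0 ∧
      (∫ x : ℝ, deriv (fun y₁ => Rt x y₁ x₂) x₁ * deriv (fun y₂ => Rt x x₁ y₂) x₂) = 0) := by
  have hβ : |β| ≤ 1 := hβ1.le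
  have hγ0 : 0 < γ := by
    have : 0 < 1 - β ^ 2 := sub_pos.mpr ((sq_lt_one_iff_abs_lt_one β).mpr hβ1)
    rw [hγ]
    positivity
  obtain rfl : R = profile β γ := by funext x x₁ x₂; exact hR x x₁ x₂
  obtain rfl : Rt = velocity β γ := by funext x x₁ x₂; exact hRt x x₁ x₂
  refine ⟨fun x₁ => odd_velocity x₁, fun x₁ => odd_deriv_velocity_x₁ x₁,
    fun x₁ => (odd_profile x₁).deriv_even, fun x₁ x => ?_, fun x₁ x₂ => ?_⟩
  · simp only [deriv_velocity_x₂_eq_centered, add_zero]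
    exact (odd_velocity x₁).deriv_even x
  · simp only [velocity_eq_centered _ _ x₂, deriv_profile_eq_centered _ _ x₂,
      deriv_velocity_x₂_eq_centered]
    exact ⟨(integrable_velocity_mul_deriv_profile hβ hγ0.ne' x₁).comp_add_right x₂,
      (integrable_deriv_velocity_x₁_mul_deriv_velocity hβ hγ0.ne' x₁).comp_add_right x₂,
      ((odd_velocity x₁).mul_even (odd_profile x₁).deriv_even).integral_comp_add_right_eq_zero x₂,
      ((odd_deriv_velocity_x₁ x₁).mul_even
        (odd_velocity x₁).deriv_even).integral_comp_add_right_eq_zero x₂⟩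

/-- **Parity and orthogonality for the 2-kink profile (Appendix B.2).**
For the 2-kink profile `R(x;β,x₁,x₂)` and its time-derivative profile `Rₜ(x;β,x₁,x₂)`:
(a) when `x₂ = 0`, `x ↦ Rₜ` and `x ↦ ∂_{x₁}Rₜ` are odd while `x ↦ ∂ₓR` and
`x ↦ ∂_{x₂}Rₜ` are even; (b) for all `x₁, x₂`, the products `Rₜ·∂ₓR` and
`∂_{x₁}Rₜ·∂_{x₂}Rₜ` are integrable over `ℝ` with vanishing integrals. -/
theorem two_kink_parity_orthogonality (β : ℝ) (hβ0 : 0 < |β|) (hβ1 : |β| < 1)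
    (γ : ℝ) (hγ : γ = (1 - β ^ 2) ^ (-(1 / 2 : ℝ)))
    (R Rt : ℝ → ℝ → ℝ → ℝ)
    (hR : ∀ x y₁ y₂ : ℝ, R x y₁ y₂
      = 4 * Real.arctan (β * Real.sinh (γ * (x + y₂)) / Real.cosh (γ * y₁)))
    (hRt : ∀ x y₁ y₂ : ℝ, Rt x y₁ y₂
      = -4 * β ^ 2 * γ * Real.sinh (γ * (x + y₂)) * Real.sinh (γ * y₁)
          / ((Real.cosh (γ * y₁)) ^ 2 + β ^ 2 * (Real.sinh (γ * (x + y₂))) ^ 2)) :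
    -- (a) parity at x₂ = 0
    (∀ x₁ x : ℝ, Rt (-x) x₁ 0 = -Rt x x₁ 0) ∧
    (∀ x₁ x : ℝ, deriv (fun y₁ => Rt (-x) y₁ 0) x₁ = -deriv (fun y₁ => Rt x y₁ 0) x₁) ∧
    (∀ x₁ x : ℝ, deriv (fun y => R y x₁ 0) (-x) = deriv (fun y => R y x₁ 0) x) ∧
    (∀ x₁ x : ℝ, deriv (fun y₂ => Rt (-x) x₁ y₂) 0 = deriv (fun y₂ => Rt x x₁ y₂) 0) ∧
    -- (b) orthogonality for all shifts
    (∀ x₁ x₂ : ℝ,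
      Integrable (fun x : ℝ => Rt x x₁ x₂ * deriv (fun y => R y x₁ x₂) x) ∧
      Integrable (fun x : ℝ =>
        deriv (fun y₁ => Rt x y₁ x₂) x₁ * deriv (fun y₂ => Rt x x₁ y₂) x₂) ∧
      (∫ x : ℝ, Rt x x₁ x₂ * deriv (fun y => R y x₁ x₂) x) = 0 ∧
      (∫ x : ℝ, deriv (fun y₁ => Rt x y₁ x₂) x₁ * deriv (fun y₂ => Rt x x₁ y₂) x₂) = 0) :=
  two_kink_parity_orthogonality_general β hβ1 γ hγ R Rt hR hRt
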